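/- The two adjacencies neighboring any entangled adjacency always have the same direction (both positive or both negative). -/

import Mathlib

open List

variable {α : Type*}

/-- A signed symbol: (name, orientation); `true` means positive. -/
abbrev SSym (α : Type*) := α × Bool

/-- Negation (orientation flip) of a signed symbol. -/
def symNeg (x : SSym α) : SSym α := (x.1, !x.2)

/-- Left node of an occurrence: a node `(a, true)` denotes the head `aʰ`,
and `(a, false)` denotes the tail `aᵗ`; a positive occurrence contributes
`(aʰ, aᵗ)`, a negative one `(aᵗ, aʰ)`. -/
def lnode (x : SSym α) : SSym α := x

/-- Right node of an occurrence. -/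
def rnode (x : SSym α) : SSym α := (x.1, !x.2)

/-- The unordered adjacency between two consecutive occurrences. -/
def adjOf (u v : SSym α) : Multiset (SSym α) := {rnode u, lnode v}

/-- The multiset of adjacencies of a chromosome. -/
def adjMS : List (SSym α) → Multiset (Multiset (SSym α))
  | u :: v :: rest => adjOf u v ::ₘ adjMS (v :: rest)
  | _ => 0

/-- Reversed and negated form of a segment. -/
def revneg (s : List (SSym α)) : List (SSym α) := (s.map symNeg).reverse

/-- One symmetric reversal: the reversed segment is flanked by a pair of
inverted occurrences of the same repeat. -/
def SymRev (π π' : List (SSym α)) : Prop :=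
  ∃ (p m q : List (SSym α)) (x : SSym α),
    π = p ++ x :: m ++ symNeg x :: q ∧
    π' = p ++ x :: revneg m ++ symNeg x :: q

/-- A symmetric reversal performed on the repeat `a`. -/
def SymRevOn (a : α) (π π' : List (SSym α)) : Prop :=
  ∃ (p m q : List (SSym α)) (x : SSym α), x.1 = a ∧
    π = p ++ x :: m ++ symNeg x :: q ∧
    π' = p ++ x :: revneg m ++ symNeg x :: q

/-- `π` can be transformed into `τ` by a series of symmetric reversals. -/
def Transformable (π τ : List (SSym α)) : Prop := Relation.ReflTransGen SymRev π τ

/-- `π` can be transformed into `τ` by exactly `m` symmetric reversals. -/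
def ChainRev : ℕ → List (SSym α) → List (SSym α) → Prop
  | 0, π, τ => π = τ
  | n + 1, π, τ => ∃ π', SymRev π π' ∧ ChainRev n π' τ

/-- A chromosome is flanked by `+r₀` and `-r₀`. -/
def IsChromosome (r₀ : α) (π : List (SSym α)) : Prop :=
  ∃ m : List (SSym α), π = (r₀, true) :: m ++ [(r₀, false)]

/-- Duplication number of symbol `a` in `π` (occurrences in both orientations). -/
def dpCount [DecidableEq α] (a : α) (π : List (SSym α)) : ℕ := (π.map Prod.fst).count a

/-- Related chromosomes: identical duplication numbers for every gene/repeat. -/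
def Related [DecidableEq α] (π τ : List (SSym α)) : Prop := ∀ a, dpCount a π = dpCount a τ

/-- A chromosome is simple if every adjacency appears only once. -/
def Simple [DecidableEq α] (π : List (SSym α)) : Prop := ∀ A, (adjMS π).count A ≤ 1

/-- Deletion of all occurrences of the repeat `b`. -/
def delSym [DecidableEq α] (b : α) (π : List (SSym α)) : List (SSym α) :=
  π.filter fun x => decide (x.1 ≠ b)

/-- The repeat `a` is neighbor-consistent: the two adjacencies flanking any of its
occurrences in `π` are matched to the two adjacencies flanking a single
occurrence of `a` in `τ`. -/
def NeighborConsistent (π τ : List (SSym α)) (a : α) : Prop :=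
  ∀ (p q : List (SSym α)) (u x v : SSym α),
    π = p ++ u :: x :: v :: q → x.1 = a →
    ∃ (p' q' : List (SSym α)) (u' y v' : SSym α),
      τ = p' ++ u' :: y :: v' :: q' ∧ y.1 = a ∧
      ({adjOf u x, adjOf x v} : Multiset (Multiset (SSym α))) =
        {adjOf u' y, adjOf y v'}

/-- The repeat `a` is black in `IG(π, τ)`: its two occurrences in `π`
have opposite signs. -/
def Black (π : List (SSym α)) (a : α) : Prop :=
  ∃ (p q r : List (SSym α)) (x y : SSym α),
    π = p ++ x :: q ++ y :: r ∧ x.1 = a ∧ y.1 = a ∧ x.2 ≠ y.2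

/-- The occurrence intervals of the repeats `a` and `b` interleave in `π`
(the adjacency relation of the intersection graph `IG(π, τ)`). -/
def Interleaves (π : List (SSym α)) (a b : α) : Prop :=
  a ≠ b ∧ ∃ (p q r s t : List (SSym α)) (x y x' y' : SSym α),
    x.1 = a ∧ x'.1 = a ∧ y.1 = b ∧ y'.1 = b ∧
    (π = p ++ x :: q ++ y :: r ++ x' :: s ++ y' :: t ∨
     π = p ++ y :: q ++ x :: r ++ y' :: s ++ x' :: t)

/-- Two repeats are in the same connected component of the intersection graph. -/
def InSameComponent (π : List (SSym α)) : α → α → Prop :=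
  Relation.ReflTransGen (Interleaves π)

/-- An abstract vertex-colored, vertex-weighted graph (intersection graph). -/
structure ColoredGraph (V : Type*) where
  adj : V → V → Prop
  black : V → Prop
  weight : V → ℕ

/-- The effect of performing a symmetric reversal on a black vertex `x`:
(rule-I) the colors of all neighbors of `x` are toggled; (rule-II) adjacency
among the neighbors of `x` is complemented; (rule-III) the weight of `x`
is decremented (and `x` is deleted when the weight reaches `0`). -/
def reverseAt {V : Type*} [DecidableEq V] (G : ColoredGraph V) (x : V) :
    ColoredGraph V where
  adj u v := (G.adj x u ∧ G.adj x v ∧ ¬ G.adj u v ∧ u ≠ v) ∨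
    (¬ (G.adj x u ∧ G.adj x v) ∧ G.adj u v)
  black v := (G.adj x v ∧ ¬ G.black v) ∨ (¬ G.adj x v ∧ G.black v)
  weight v := if v = x then G.weight v - 1 else G.weight v

/-- Reachability in a colored graph avoiding deleted (`dead`) vertices. -/
def Reach {V : Type*} (G : ColoredGraph V) (dead : V → Prop) : V → V → Prop :=
  Relation.ReflTransGen (fun u v => G.adj u v ∧ ¬ dead u ∧ ¬ dead v)

/-- The 2-balanced condition: any two occurrences of the same repeat in `τ`
have opposite signs. -/
def BalancedTarget (τ : List (SSym α)) : Prop :=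
  ∀ (p q r : List (SSym α)) (x y : SSym α),
    τ = p ++ x :: q ++ y :: r → x.1 = y.1 → x.2 ≠ y.2

/-- The adjacency `⟨u, v⟩` of `π` is positive: it is matched to an adjacency
`⟨y_j, y_{j+1}⟩` of `τ` with `r(u) = r(y_j)` and `l(v) = l(y_{j+1})`, i.e.
`τ` contains the consecutive pair `u v` literally. -/
def PosIn (τ : List (SSym α)) (u v : SSym α) : Prop :=
  ∃ p q : List (SSym α), τ = p ++ u :: v :: q

/-- The adjacency `⟨u, v⟩` of `π` is negative: `τ` contains its reversed and
negated form. -/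
def NegIn (τ : List (SSym α)) (u v : SSym α) : Prop := PosIn τ (symNeg v) (symNeg u)

/-- Positive and not entangled. -/
def StrictPos (τ : List (SSym α)) (u v : SSym α) : Prop := PosIn τ u v ∧ ¬ NegIn τ u v

/-- Negative and not entangled. -/
def StrictNeg (τ : List (SSym α)) (u v : SSym α) : Prop := NegIn τ u v ∧ ¬ PosIn τ u v

/-- An entangled adjacency can be read both positively and negatively. -/
def EntangledAdj (τ : List (SSym α)) (u v : SSym α) : Prop := PosIn τ u v ∧ NegIn τ u v

/-- The occurrence `x` (with left neighbor `w` and right neighbor `v`) is a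
boundary: its left and right adjacencies have distinct directions. -/
def IsBoundary (τ : List (SSym α)) (w x v : SSym α) : Prop :=
  (StrictPos τ w x ∧ StrictNeg τ x v) ∨ (StrictNeg τ w x ∧ StrictPos τ x v)

/-- The list of consecutive pairs (adjacencies) of a chromosome. -/
def pairsOf (π : List (SSym α)) : List (SSym α × SSym α) := π.zip π.tail

/-- A direction assignment (`true` = positive) compatible with the bijection
between the adjacencies of `π` and `τ`. -/
def DirOK (τ π : List (SSym α)) (d : List Bool) : Prop :=
  List.Forall₂ (fun (pr : SSym α × SSym α) (b : Bool) =>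
    (b = true → PosIn τ pr.1 pr.2) ∧ (b = false → NegIn τ pr.1 pr.2)) (pairsOf π) d

/-- Number of maximal `false`-runs (maximal negative segments). -/
def nMNSAux : Bool → List Bool → ℕ
  | _, [] => 0
  | prev, b :: rest => (if prev = true ∧ b = false then 1 else 0) + nMNSAux b rest

def nMNS (d : List Bool) : ℕ := nMNSAux true d

/-- `N_MNS[π]`: the number of maximal negative segments of `π` relative to `τ`
(entangled adjacencies assigned so that the number of MNS is minimized,
i.e. taking the common direction of their neighbors). -/
noncomputable def NMNS (π τ : List (SSym α)) : ℕ :=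
  sInf { n | ∃ d : List Bool, DirOK τ π d ∧ n = nMNS d }

/-- A node position of the alternative-cycle graph: `(i, false)` is the left
node of the `i`-th occurrence of `π`, `(i, true)` its right node. -/
abbrev NodePos := ℕ × Bool

/-- The value (as a node of the form `aʰ`/`aᵗ`) sitting at a node position. -/
def nodeVal (π : List (SSym α)) (p : NodePos) : Option (SSym α) :=
  (π[p.1]?).map fun x => if p.2 then rnode x else lnode x

/-- The adjacency of `π` between positions `i` and `i+1`, if any. -/
def adjAt (π : List (SSym α)) (i : ℕ) : Option (Multiset (SSym α)) :=
  match π[i]?, π[i+1]? with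
  | some u, some v => some (adjOf u v)
  | _, _ => none

/-- `f` is a bijection matching each adjacency of `τ` with an identical
adjacency of `π`. -/
def AdjBijection (π τ : List (SSym α)) (f : ℕ → ℕ) : Prop :=
  Set.BijOn f (Set.Iio (τ.length - 1)) (Set.Iio (π.length - 1)) ∧
  ∀ k < τ.length - 1, adjAt τ k = adjAt π (f k)

/-- The blue edge of `ACG(π, τ, f)` corresponding to the `k`-th occurrence of
`τ`: it joins the node of the `f`-image of the adjacency on the left of `y_k`
carrying the value `l(y_k)` with the node of the `f`-image of the adjacency on
the right of `y_k` carrying the value `r(y_k)`. -/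
def IsBlueEdge (π τ : List (SSym α)) (f : ℕ → ℕ) (k : ℕ) (e₁ e₂ : NodePos) : Prop :=
  ∃ y : SSym α, τ[k]? = some y ∧
    (if k = 0 then e₁ = (0, false)
     else (e₁ = (f (k-1), true) ∨ e₁ = (f (k-1) + 1, false)) ∧
       nodeVal π e₁ = some (lnode y)) ∧
    (if k = τ.length - 1 then e₂ = (π.length - 1, true)
     else (e₂ = (f k, true) ∨ e₂ = (f k + 1, false)) ∧
       nodeVal π e₂ = some (rnode y))

/-- A green edge joins `r(x_i)` and `l(x_{i+1})` (an adjacency of `π`). -/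
def GreenEdge (p q : NodePos) : Prop :=
  (p.2 = true ∧ q = (p.1 + 1, false)) ∨ (q.2 = true ∧ p = (q.1 + 1, false))

/-- A step along a blue or a green edge. -/
def BGStep (π τ : List (SSym α)) (f : ℕ → ℕ) (p q : NodePos) : Prop :=
  GreenEdge p q ∨ ∃ k, IsBlueEdge π τ f k p q ∨ IsBlueEdge π τ f k q p

/-
In a simple `τ` the positive and the negative reading of an entangled adjacency `⟨u, v⟩` are the
same adjacency of `τ`, hence the same position, so `v = -u`. As the repeat `u.1` occurs at most
twice in `τ`, `u` and `-u` occur exactly once there, so `u` has a unique left neighbour and `-u` a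
unique right neighbour in `τ`. Every adjacency of `π` is an adjacency of `τ`, hence positive or
negative. If `⟨w, u⟩` is positive and `⟨-u, z⟩` negative, the left neighbour of `u` in `τ` is both
`w` and `-z`; in the opposite mixed case the right neighbour of `-u` is both `-w` and `z`. Either
way `z = -w`, and then `⟨w, u⟩` and `⟨-u, z⟩` are the same adjacency twice in `π`, which is not
simple.
-/

lemma symNeg_involutive : Function.Involutive (symNeg : SSym α → SSym α) := fun x => by
  simp [symNeg]

@[simp] lemma symNeg_symNeg (x : SSym α) : symNeg (symNeg x) = x := symNeg_involutive x

@[simp] lemma symNeg_inj {x y : SSym α} : symNeg x = symNeg y ↔ x = y :=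
  symNeg_involutive.injective.eq_iff

lemma adjOf_eq_pair (u v : SSym α) : adjOf u v = {symNeg u, v} := rfl

lemma adjOf_symNeg_symNeg (u v : SSym α) : adjOf (symNeg v) (symNeg u) = adjOf u v := by
  simp only [adjOf_eq_pair, symNeg_symNeg, Multiset.pair_comm]

lemma Multiset.pair_eq_pair_iff {β : Type*} {a b c d : β} :
    ({a, b} : Multiset β) = {c, d} ↔ (a = c ∧ b = d) ∨ (a = d ∧ b = c) := by
  constructor
  · intro h
    have ha : a ∈ ({c, d} : Multiset β) := h ▸ by simp
    rw [Multiset.insert_eq_cons, Multiset.mem_cons, Multiset.mem_singleton] at ha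
    rcases ha with rfl | rfl
    · simp_all [Multiset.insert_eq_cons]
    · rw [Multiset.pair_comm c] at h
      simp_all [Multiset.insert_eq_cons]
  · rintro (⟨rfl, rfl⟩ | ⟨rfl, rfl⟩)
    · rfl
    · exact Multiset.pair_comm _ _

lemma adjOf_eq_adjOf_iff {a b c d : SSym α} :
    adjOf a b = adjOf c d ↔ (c = a ∧ d = b) ∨ (c = symNeg b ∧ d = symNeg a) := by
  constructor
  · intro h
    rw [adjOf_eq_pair, adjOf_eq_pair] at h
    rcases Multiset.pair_eq_pair_iff.mp h with ⟨h₁, h₂⟩ | ⟨h₁, h₂⟩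
    · exact Or.inl ⟨symNeg_inj.mp h₁.symm, h₂.symm⟩
    · exact Or.inr ⟨by rw [h₂, symNeg_symNeg], h₁.symm⟩
  · rintro (⟨rfl, rfl⟩ | ⟨rfl, rfl⟩)
    · rfl
    · exact (adjOf_symNeg_symNeg a b).symm

lemma dpCount_eq_count_add_count_symNeg [DecidableEq α] (x : SSym α) (l : List (SSym α)) :
    dpCount x.1 l = l.count x + l.count (symNeg x) := by
  induction l with
  | nil => rfl
  | cons y l ih =>
    simp only [dpCount, symNeg, List.map_cons, List.count_cons, beq_iff_eq] at ih ⊢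
    obtain ⟨a, s⟩ := y
    obtain ⟨b, t⟩ := x
    by_cases hab : a = b
    · cases hab; cases s <;> cases t <;> simp at ih ⊢ <;> omega
    · simp [hab, ih]

lemma adjMS_eq_zipWith (l : List (SSym α)) : adjMS l = ↑(List.zipWith adjOf l l.tail) := by
  match l with
  | [] | [_] => rfl
  | u :: v :: l => simp [adjMS, adjMS_eq_zipWith (v :: l)]

lemma exists_getElem_zipWith_adjOf_tail {l p q : List (SSym α)} {a b : SSym α}
    (h : l = p ++ a :: b :: q) :
    ∃ hi, (List.zipWith adjOf l l.tail)[p.length]'hi = adjOf a b := by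
  subst h
  refine ⟨by simp, ?_⟩
  simp [List.getElem_append_right]

lemma Simple.length_eq_of_adjOf_eq [DecidableEq α] {l p₁ q₁ p₂ q₂ : List (SSym α)}
    {a b c d : SSym α} (hl : Simple l) (h₁ : l = p₁ ++ a :: b :: q₁)
    (h₂ : l = p₂ ++ c :: d :: q₂) (he : adjOf a b = adjOf c d) :
    p₁.length = p₂.length := by
  have hnd : (List.zipWith adjOf l l.tail).Nodup := by
    rw [← Multiset.coe_nodup, ← adjMS_eq_zipWith, Multiset.nodup_iff_count_le_one]
    exact hl
  obtain ⟨hi₁, e₁⟩ := exists_getElem_zipWith_adjOf_tail h₁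
  obtain ⟨hi₂, e₂⟩ := exists_getElem_zipWith_adjOf_tail h₂
  exact (hnd.getElem_inj_iff).mp (e₁.trans (he.trans e₂.symm))

lemma mem_adjMS_of_posIn {l : List (SSym α)} {a b : SSym α} (h : PosIn l a b) :
    adjOf a b ∈ adjMS l := by
  obtain ⟨p, q, hl⟩ := h
  obtain ⟨hi, e⟩ := exists_getElem_zipWith_adjOf_tail hl
  rw [adjMS_eq_zipWith, Multiset.mem_coe, ← e]
  exact List.getElem_mem hi

lemma exists_posIn_of_mem_adjMS {l : List (SSym α)} {A : Multiset (SSym α)}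
    (h : A ∈ adjMS l) : ∃ a b, PosIn l a b ∧ adjOf a b = A := by
  match l, h with
  | u :: v :: l, h =>
    rcases Multiset.mem_cons.mp h with rfl | h
    · exact ⟨u, v, ⟨[], l, rfl⟩, rfl⟩
    · obtain ⟨a, b, ⟨p, q, hl⟩, rfl⟩ := exists_posIn_of_mem_adjMS h
      exact ⟨a, b, ⟨u :: p, q, by rw [hl]; rfl⟩, rfl⟩

lemma posIn_or_negIn_of_adjOf_mem_adjMS {τ : List (SSym α)} {u v : SSym α}
    (h : adjOf u v ∈ adjMS τ) : PosIn τ u v ∨ NegIn τ u v := by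
  obtain ⟨a, b, hab, he⟩ := exists_posIn_of_mem_adjMS h
  rcases adjOf_eq_adjOf_iff.mp he with ⟨rfl, rfl⟩ | ⟨rfl, rfl⟩
  · exact Or.inl hab
  · exact Or.inr (by simpa [NegIn] using hab)

lemma List.append_cons_inj_of_count_le_one {β : Type*} [BEq β] [LawfulBEq β]
    {l p₁ q₁ p₂ q₂ : List β} {x : β} (hx : l.count x ≤ 1)
    (h₁ : l = p₁ ++ x :: q₁) (h₂ : l = p₂ ++ x :: q₂) : p₁ = p₂ ∧ q₁ = q₂ := by
  have idxOf_eq {p q : List β} (h : l = p ++ x :: q) : l.idxOf x = p.length := by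
    have hp : x ∉ p := by
      rw [← List.count_eq_zero]
      rw [h, List.count_append, List.count_cons_self] at hx
      omega
    rw [h, List.idxOf_append_of_notMem hp, List.idxOf_cons_self, add_zero]
  have := List.append_inj (h₁.symm.trans h₂) ((idxOf_eq h₁).symm.trans (idxOf_eq h₂))
  simpa using this

section
variable [DecidableEq α] {τ : List (SSym α)}

lemma PosIn.left_unique {w w' u : SSym α} (hu : τ.count u ≤ 1) (h : PosIn τ w u)
    (h' : PosIn τ w' u) : w = w' := by
  obtain ⟨p, q, hτ⟩ := h
  obtain ⟨p', q', hτ'⟩ := h'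
  have := (List.append_cons_inj_of_count_le_one hu (p₁ := p ++ [w]) (q₁ := q)
    (p₂ := p' ++ [w']) (q₂ := q') (by simp [hτ]) (by simp [hτ'])).1
  exact List.singleton_inj.mp (List.append_inj' this rfl).2

lemma PosIn.right_unique {u v v' : SSym α} (hu : τ.count u ≤ 1) (h : PosIn τ u v)
    (h' : PosIn τ u v') : v = v' := by
  obtain ⟨p, q, hτ⟩ := h
  obtain ⟨p', q', hτ'⟩ := h'
  exact (List.cons.inj (List.append_cons_inj_of_count_le_one hu hτ hτ').2).1

lemma EntangledAdj.eq_symNeg {u v : SSym α} (hτ : Simple τ) (h : EntangledAdj τ u v) :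
    v = symNeg u := by
  obtain ⟨⟨p, q, hpq⟩, ⟨p', q', hpq'⟩⟩ := h
  have hlen := hτ.length_eq_of_adjOf_eq hpq hpq' (adjOf_symNeg_symNeg u v).symm
  obtain ⟨-, hcons⟩ := List.append_inj (hpq.symm.trans hpq') hlen
  simp only [List.cons.injEq] at hcons
  exact hcons.2.1

lemma count_le_one_of_posIn_symNeg {u : SSym α} (hdp : dpCount u.1 τ ≤ 2)
    (h : PosIn τ u (symNeg u)) : τ.count u ≤ 1 ∧ τ.count (symNeg u) ≤ 1 := by
  obtain ⟨p, q, rfl⟩ := h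
  rw [dpCount_eq_count_add_count_symNeg] at hdp
  have hu := List.count_pos_iff.mpr (show u ∈ p ++ u :: symNeg u :: q by simp)
  have hu' := List.count_pos_iff.mpr (show symNeg u ∈ p ++ u :: symNeg u :: q by simp)
  omega

lemma Simple.adjOf_ne_adjOf {π p q : List (SSym α)} {w u v z : SSym α} (hπ : Simple π)
    (h : π = p ++ w :: u :: v :: z :: q) : adjOf w u ≠ adjOf v z := fun he => by
  have := hπ.length_eq_of_adjOf_eq h (p₂ := p ++ [w, u]) (q₂ := q) (by simp [h]) he
  simp at this

end

theorem entangled_neighbors_same_direction_general [DecidableEq α] (π τ : List (SSym α))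
    (hs : Simple π) (hst : Simple τ) (hdpτ : ∀ c, dpCount c τ ≤ 2) (hA : adjMS π = adjMS τ)
    (p q : List (SSym α)) (w u v z : SSym α)
    (hdec : π = p ++ w :: u :: v :: z :: q)
    (hent : EntangledAdj τ u v) :
    (PosIn τ w u ↔ PosIn τ v z) ∧ (NegIn τ w u ↔ NegIn τ v z) := by
  obtain rfl : v = symNeg u := hent.eq_symNeg hst
  obtain ⟨hu, hu'⟩ := count_le_one_of_posIn_symNeg (hdpτ u.1) hent.1
  have hzw : z ≠ symNeg w := by
    rintro rfl
    exact hs.adjOf_ne_adjOf hdec (adjOf_symNeg_symNeg w u).symm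
  have hwu : PosIn τ w u ∨ NegIn τ w u :=
    posIn_or_negIn_of_adjOf_mem_adjMS (hA ▸ mem_adjMS_of_posIn ⟨p, _, hdec⟩)
  have hvz : PosIn τ (symNeg u) z ∨ NegIn τ (symNeg u) z :=
    posIn_or_negIn_of_adjOf_mem_adjMS (hA ▸ mem_adjMS_of_posIn ⟨p ++ [w, u], q, by simp [hdec]⟩)
  have hpos_neg : ¬ (PosIn τ w u ∧ NegIn τ (symNeg u) z) := fun ⟨h, h'⟩ =>
    hzw (by rw [h.left_unique hu (by simpa [NegIn] using h'), symNeg_symNeg])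
  have hneg_pos : ¬ (NegIn τ w u ∧ PosIn τ (symNeg u) z) := fun ⟨h, h'⟩ =>
    hzw (h'.right_unique hu' h)
  tauto

/-- the two adjacencies neighboring any entangled adjacency
have the same direction. -/
theorem entangled_neighbors_same_direction [DecidableEq α] (r₀ : α)
    (π τ : List (SSym α)) (hπ : IsChromosome r₀ π) (hτ : IsChromosome r₀ τ)
    (hs : Simple π) (hst : Simple τ) (hrel : Related π τ)
    (hdpπ : ∀ c, dpCount c π ≤ 2) (hdpτ : ∀ c, dpCount c τ ≤ 2)
    (hbal : BalancedTarget τ) (hA : adjMS π = adjMS τ)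
    (p q : List (SSym α)) (w u v z : SSym α)
    (hdec : π = p ++ w :: u :: v :: z :: q)
    (hent : EntangledAdj τ u v) :
    (PosIn τ w u ↔ PosIn τ v z) ∧ (NegIn τ w u ↔ NegIn τ v z) :=
  entangled_neighbors_same_direction_general π τ hs hst hdpτ hA p q w u v z hdec hent
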